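/- arXiv:2107.09107 — 6 statements merged into one kernel-verified Lean document; each statement's English description precedes it below -/
import Mathlib

section
/- For every fixed integer k ≥ 2, the average order of N_k is k(k-1); precisely, (1/M) · Σ_{a=3}^{M} N_k(a) → k(k-1) as M → ∞ (equivalently, including a = 2 does not change the limit). -/
/-- `Nk k a` is the number of `k`-tuples `(m₁, …, m_k)` of nonnegative integers whose
multinomial coefficient `(m₁ + ⋯ + m_k)! / (m₁! ⋯ m_k!)` equals `a`. -/
noncomputable def Nk (k : ℕ) (a : ℕ) : ℕ :=
  {m : Fin k → ℕ | Nat.multinomial Finset.univ m = a}.ncard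

/-!
For `a ≥ 3` the tuples with multinomial coefficient `a` include the `k (k - 1)` trivial ones,
the permutations of `(a - 1, 1, 0, …, 0)`, which produce the main term `k (k - 1) (M - 2)`.
Any other such tuple `m` has, at a maximal entry `b = m i`, a rest `s = ∑_{j ≠ i} m j ≥ 2`.
Then `binom(b + 2, 2) ≤ a`; and peeling off the other coordinates one at a time, each factor
`binom(m j + ⋯, m j)` with `m j ≤ b` is at least `2 ^ m j`, so `2 ^ s ≤ a`. Hence the nontrivial
tuples with `a ≤ M` lie in `k` boxes with `O(√M (log M) ^ (k - 1)) = o(M)` points.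
-/

open Finset Filter Topology

namespace Nat

theorem two_pow_le_centralBinom (n : ℕ) : 2 ^ n ≤ centralBinom n := by
  induction n with
  | zero => simp
  | succ n ih =>
    refine Nat.le_of_mul_le_mul_left ?_ n.succ_pos
    calc (n + 1) * 2 ^ (n + 1) = 2 * (n + 1) * 2 ^ n := by ring
      _ ≤ 2 * (2 * n + 1) * centralBinom n := by gcongr; omega
      _ = (n + 1) * centralBinom (n + 1) := (succ_mul_centralBinom_succ n).symm

theorem two_pow_le_add_choose {a b : ℕ} (h : a ≤ b) : 2 ^ a ≤ (a + b).choose a :=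
  (two_pow_le_centralBinom a).trans <| by
    rw [centralBinom_eq_two_mul_choose]; exact choose_le_choose a (by omega)

theorem add_one_mul_add_two_eq_two_mul_choose (b : ℕ) :
    (b + 1) * (b + 2) = 2 * (b + 2).choose b := by
  have := add_one_mul_choose_eq (b + 1) 1
  rw [choose_symm_add]
  simp only [choose_one_right] at this
  linarith

variable {α : Type*} [DecidableEq α] {s : Finset α} {f : α → ℕ} {i : α}

theorem multinomial_eq_choose_mul_multinomial_erase (hi : i ∈ s) :
    multinomial s f =
      (f i + ∑ j ∈ s.erase i, f j).choose (f i) * multinomial (s.erase i) f := by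
  rw [← multinomial_insert (notMem_erase i s), insert_erase hi]

theorem add_choose_le_multinomial (hi : i ∈ s) {t : ℕ} (ht : t ≤ ∑ j ∈ s.erase i, f j) :
    (f i + t).choose (f i) ≤ multinomial s f := by
  rw [multinomial_eq_choose_mul_multinomial_erase hi]
  exact (choose_le_choose _ (by omega)).trans (Nat.le_mul_of_pos_right _ (multinomial_pos _ _))

theorem multinomial_eq_one_of_sum_erase_eq_zero (hi : i ∈ s)
    (h : ∑ j ∈ s.erase i, f j = 0) : multinomial s f = 1 := by
  rw [multinomial_congr (g := Pi.single i (f i)), multinomial_single]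
  intro j hj
  rcases eq_or_ne j i with rfl | hji
  · simp
  · rw [Pi.single_eq_of_ne hji]
    exact sum_eq_zero_iff.mp h j (mem_erase.mpr ⟨hji, hj⟩)

theorem add_one_mul_add_two_le_two_mul_multinomial (hi : i ∈ s)
    (h : 2 ≤ ∑ j ∈ s.erase i, f j) : (f i + 1) * (f i + 2) ≤ 2 * multinomial s f := by
  rw [add_one_mul_add_two_eq_two_mul_choose]
  exact Nat.mul_le_mul_left 2 (add_choose_le_multinomial hi h)

theorem two_pow_sum_le_multinomial_insert (hi : i ∉ s) (hmax : ∀ j ∈ s, f j ≤ f i) :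
    2 ^ (∑ j ∈ s, f j) ≤ multinomial (insert i s) f := by
  induction s using Finset.induction_on with
  | empty => simp
  | @insert j s hjs ih =>
    have hj : j ∉ insert i s := by grind
    have hfj : f j ≤ ∑ l ∈ insert i s, f l :=
      (hmax j (mem_insert_self j s)).trans (single_le_sum (by simp) (mem_insert_self i s))
    rw [insert_comm, multinomial_insert hj, sum_insert hjs, pow_add]
    exact Nat.mul_le_mul (two_pow_le_add_choose hfj)
      (ih (by grind) fun l hl => hmax l (mem_insert_of_mem hl))

theorem two_pow_sum_erase_le_multinomial (hi : i ∈ s) (hmax : ∀ j ∈ s, f j ≤ f i) :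
    2 ^ (∑ j ∈ s.erase i, f j) ≤ multinomial s f := by
  simpa [insert_erase hi] using
    two_pow_sum_le_multinomial_insert (notMem_erase i s) fun j hj => hmax j (mem_of_mem_erase hj)

end Nat

open Nat (multinomial)

section Tuples

variable {ι : Type*} [DecidableEq ι]

def trivialTuple (a : ℕ) (i j : ι) : ι → ℕ := Pi.single i (a - 1) + Pi.single j 1

-- At `a = 2` the pairs `(i, j)` and `(j, i)` give the same tuple.
theorem trivialTuple_injOn :
    Set.InjOn (fun x : ℕ × ι × ι => trivialTuple x.1 x.2.1 x.2.2)
      {x | 3 ≤ x.1 ∧ x.2.1 ≠ x.2.2} := by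
  rintro ⟨a, i, j⟩ h ⟨a', i', j'⟩ h' he
  have h1 := congrFun he i
  have h2 := congrFun he j
  simp only [trivialTuple, Pi.add_apply, Pi.single_eq_same, Pi.single_apply, Prod.mk.injEq]
    at h1 h2 ⊢
  grind

variable [Fintype ι]

def IsNontrivialTuple (m : ι → ℕ) : Prop := ∀ i, 2 ≤ ∑ j ∈ univ.erase i, m j

instance : DecidablePred (IsNontrivialTuple (ι := ι)) :=
  fun _ => Fintype.decidableForallFintype

theorem multinomial_trivialTuple {a : ℕ} (ha : 1 ≤ a) {i j : ι} (hij : i ≠ j) :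
    multinomial univ (trivialTuple a i j) = a := by
  rw [← Nat.multinomial_congr_of_sdiff (subset_univ {i, j}) (fun l hl => ?_) fun _ _ => rfl,
    Nat.binomial_eq_choose hij]
  · simp [trivialTuple, hij, hij.symm, Nat.sub_add_cancel ha, Nat.choose_symm ha]
  · simp only [Finset.mem_sdiff, mem_univ, mem_insert, mem_singleton, not_or, true_and] at hl
    simp [trivialTuple, hl]

theorem not_isNontrivialTuple_trivialTuple (a : ℕ) {i j : ι} (hij : i ≠ j) :
    ¬ IsNontrivialTuple (trivialTuple a i j) := by
  intro h
  have := h i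
  simp [trivialTuple, sum_add_distrib, Pi.single_apply, hij.symm] at this

theorem apply_lt_multinomial {m : ι → ℕ} (hm : 2 ≤ multinomial univ m) (i : ι) :
    m i < multinomial univ m := by
  by_cases h : ∑ j ∈ univ.erase i, m j = 0
  · rw [Nat.multinomial_eq_one_of_sum_erase_eq_zero (mem_univ i) h] at hm
    omega
  · have := Nat.add_choose_le_multinomial (f := m) (mem_univ i) (t := 1) (by omega)
    rw [Nat.choose_succ_self_right] at this
    omega

theorem exists_eq_trivialTuple {m : ι → ℕ} (hm : 2 ≤ multinomial univ m)
    (h : ¬ IsNontrivialTuple m) : ∃ i j, i ≠ j ∧ m = trivialTuple (m i + 1) i j := by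
  simp only [IsNontrivialTuple, not_forall, not_le] at h
  obtain ⟨i, hi⟩ := h
  have hpos : ∑ j ∈ univ.erase i, m j ≠ 0 := fun h0 => by
    rw [Nat.multinomial_eq_one_of_sum_erase_eq_zero (mem_univ i) h0] at hm
    omega
  obtain ⟨j, hj, hmj⟩ := exists_ne_zero_of_sum_ne_zero hpos
  have hsplit := add_sum_erase _ m hj
  have hrest : ∀ l ∈ (univ.erase i).erase j, m l = 0 := sum_eq_zero_iff.mp (by omega)
  refine ⟨i, j, (ne_of_mem_erase hj).symm, funext fun l => ?_⟩
  simp only [trivialTuple, Pi.add_apply, Pi.single_apply]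
  have := hrest l
  simp only [mem_erase, ne_eq, mem_univ, and_true, and_imp] at this hj
  split_ifs <;> grind

theorem IsNontrivialTuple.exists_lt_sqrt_and_le_log {m : ι → ℕ} (h : IsNontrivialTuple m)
    (hm : 2 ≤ multinomial univ m) :
    ∃ i, m i < Nat.sqrt (2 * multinomial univ m) ∧
      ∀ j ≠ i, m j ≤ Nat.log 2 (multinomial univ m) := by
  have : Nonempty ι := by
    by_contra hι
    rw [not_nonempty_iff] at hι
    simp [univ_eq_empty] at hm
  obtain ⟨i, hi⟩ := Finite.exists_max m
  refine ⟨i, ?_, fun j hj => ?_⟩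
  · rw [Nat.lt_iff_add_one_le, Nat.le_sqrt]
    have := Nat.add_one_mul_add_two_le_two_mul_multinomial (mem_univ i) (h i)
    nlinarith
  · calc m j ≤ ∑ l ∈ univ.erase i, m l :=
          single_le_sum (by simp) (mem_erase.2 ⟨hj, mem_univ j⟩)
      _ ≤ _ := Nat.le_log_of_pow_le one_lt_two <|
          Nat.two_pow_sum_erase_le_multinomial (mem_univ i) fun j _ => hi j

variable (ι) in
def tuplesUpTo (M : ℕ) : Finset (ι → ℕ) :=
  {m ∈ Fintype.piFinset fun _ => range M | multinomial univ m ∈ Icc 3 M}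

theorem mem_tuplesUpTo {M : ℕ} {m : ι → ℕ} :
    m ∈ tuplesUpTo ι M ↔ multinomial univ m ∈ Icc 3 M := by
  simp only [tuplesUpTo, mem_filter, Fintype.mem_piFinset, mem_range, and_iff_right_iff_imp,
    mem_Icc]
  exact fun h i => (apply_lt_multinomial (by omega) i).trans_le h.2

theorem card_filter_not_isNontrivialTuple_tuplesUpTo (M : ℕ) :
    #{m ∈ tuplesUpTo ι M | ¬ IsNontrivialTuple m} =
      (M - 2) * (Fintype.card ι * Fintype.card ι - Fintype.card ι) := by
  have himage : {m ∈ tuplesUpTo ι M | ¬ IsNontrivialTuple m} =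
      (Icc 3 M ×ˢ univ.offDiag).image fun x => trivialTuple x.1 x.2.1 x.2.2 := by
    ext m
    simp only [mem_filter, mem_tuplesUpTo, mem_Icc, mem_image, mem_product, mem_offDiag,
      mem_univ, true_and, Prod.exists]
    constructor
    · rintro ⟨hm, hnt⟩
      obtain ⟨i, j, hij, heq⟩ := exists_eq_trivialTuple (by omega) hnt
      have hmi := multinomial_trivialTuple (a := m i + 1) (by omega) hij
      rw [← heq] at hmi
      exact ⟨m i + 1, i, j, ⟨hmi ▸ hm, hij⟩, heq.symm⟩
    · rintro ⟨a, i, j, ⟨ha, hij⟩, rfl⟩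
      rw [multinomial_trivialTuple (by omega) hij]
      exact ⟨ha, not_isNontrivialTuple_trivialTuple a hij⟩
  have hinj : Set.InjOn (fun x : ℕ × ι × ι => trivialTuple x.1 x.2.1 x.2.2)
      ↑(Icc 3 M ×ˢ (univ : Finset ι).offDiag) :=
    trivialTuple_injOn.mono fun x hx => by
      simp only [coe_product, coe_offDiag, Set.mem_prod, mem_coe, mem_Icc, Set.mem_offDiag] at hx
      exact ⟨hx.1.1, hx.2.2.2⟩
  rw [himage, card_image_of_injOn hinj, card_product, Nat.card_Icc, offDiag_card, card_univ]
  congr 1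

theorem card_filter_isNontrivialTuple_tuplesUpTo_le (M : ℕ) :
    #{m ∈ tuplesUpTo ι M | IsNontrivialTuple m} ≤
      Fintype.card ι * (Nat.sqrt (2 * M) * (Nat.log 2 M + 1) ^ (Fintype.card ι - 1)) := by
  set box : ι → Finset (ι → ℕ) := fun i => Fintype.piFinset <|
    Function.update (fun _ => range (Nat.log 2 M + 1)) i (range (Nat.sqrt (2 * M)))
  calc #{m ∈ tuplesUpTo ι M | IsNontrivialTuple m} ≤ #(univ.biUnion box) := card_le_card ?_
    _ ≤ ∑ i, #(box i) := card_biUnion_le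
    _ = _ := by
      simp [box, Fintype.card_piFinset, Function.apply_update (fun _ s => #s),
        prod_update_of_mem, card_univ_sdiff]
  intro m hm
  simp only [mem_filter, mem_tuplesUpTo, mem_Icc] at hm
  obtain ⟨⟨h3, hM⟩, hnt⟩ := hm
  obtain ⟨i, hi, hj⟩ := hnt.exists_lt_sqrt_and_le_log (by omega)
  simp only [mem_biUnion, mem_univ, true_and, box, Fintype.mem_piFinset]
  refine ⟨i, fun j => ?_⟩
  rcases eq_or_ne j i with rfl | hji
  · simp only [Function.update_self, mem_range]
    exact hi.trans_le (Nat.sqrt_le_sqrt (by omega))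
  · simp only [Function.update_of_ne hji, mem_range, Nat.lt_succ_iff]
    exact (hj j hji).trans (Nat.log_mono_right hM)

end Tuples

theorem sum_Nk_Icc_eq_card_tuplesUpTo (k M : ℕ) :
    ∑ a ∈ Icc 3 M, Nk k a = #(tuplesUpTo (Fin k) M) := by
  rw [card_eq_sum_card_fiberwise (f := multinomial univ) fun m hm => mem_tuplesUpTo.1 hm]
  refine sum_congr rfl fun a ha => ?_
  rw [Nk, ← Set.ncard_coe_finset, coe_filter]
  congr 1
  ext m
  exact ⟨fun h => ⟨mem_tuplesUpTo.2 (h ▸ ha), h⟩, And.right⟩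

theorem natSqrt_two_mul_div_le {M : ℕ} (hM : M ≠ 0) :
    (Nat.sqrt (2 * M) : ℝ) / M ≤ 2 / √2 ^ (Nat.log 2 M + 1) := by
  have hpow : √2 ^ (Nat.log 2 M + 1) ≤ √(2 * M) := by
    rw [Real.le_sqrt (by positivity) (by positivity), ← pow_mul, mul_comm, pow_mul,
      Real.sq_sqrt zero_le_two, pow_succ']
    gcongr
    exact_mod_cast Nat.pow_log_le_self 2 hM
  calc (Nat.sqrt (2 * M) : ℝ) / M ≤ √(2 * M) / M := by
        gcongr
        exact_mod_cast Real.nat_sqrt_le_real_sqrt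
    _ = 2 / √(2 * M) := by
        rw [div_eq_div_iff (by positivity) (by positivity), Real.mul_self_sqrt (by positivity)]
    _ ≤ 2 / √2 ^ (Nat.log 2 M + 1) := by gcongr

theorem tendsto_natSqrt_mul_natLog_pow_div (n : ℕ) :
    Tendsto (fun M : ℕ => ((Nat.sqrt (2 * M) * (Nat.log 2 M + 1) ^ n : ℕ) : ℝ) / M)
      atTop (𝓝 0) := by
  have hlog : Tendsto (fun M => Nat.log 2 M + 1) atTop atTop :=
    tendsto_atTop_atTop.2 fun b =>
      ⟨2 ^ b, fun M hM => (Nat.le_log_of_pow_le one_lt_two hM).trans (Nat.le_succ _)⟩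
  have hgeom := ((tendsto_pow_const_div_const_pow_of_one_lt n Real.one_lt_sqrt_two).comp
    hlog).const_mul 2
  rw [mul_zero] at hgeom
  refine squeeze_zero' (.of_forall fun M => by positivity) ?_ hgeom
  filter_upwards [eventually_ne_atTop 0] with M hM
  calc ((Nat.sqrt (2 * M) * (Nat.log 2 M + 1) ^ n : ℕ) : ℝ) / M
      = (Nat.sqrt (2 * M) : ℝ) / M * ((Nat.log 2 M + 1 : ℕ) : ℝ) ^ n := by push_cast; ring
    _ ≤ 2 / √2 ^ (Nat.log 2 M + 1) * ((Nat.log 2 M + 1 : ℕ) : ℝ) ^ n := by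
        gcongr ?_ * _
        exact natSqrt_two_mul_div_le hM
    _ = 2 * (((Nat.log 2 M + 1 : ℕ) : ℝ) ^ n / √2 ^ (Nat.log 2 M + 1)) := by ring

theorem average_order_Nk_general (k : ℕ) :
    Filter.Tendsto (fun M : ℕ => (∑ a ∈ Finset.Icc 3 M, (Nk k a : ℝ)) / M)
      Filter.atTop (nhds ((k : ℝ) * ((k : ℝ) - 1))) := by
  set E : ℕ → ℕ := fun M => #{m ∈ tuplesUpTo (Fin k) M | IsNontrivialTuple m}
  have hsplit : ∀ M ≥ 2,
      (∑ a ∈ Icc 3 M, (Nk k a : ℝ)) / M = k * (k - 1) * (1 - 2 / M) + E M / M := by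
    intro M hM
    rw [← Nat.cast_sum, sum_Nk_Icc_eq_card_tuplesUpTo,
      ← card_filter_add_card_filter_not IsNontrivialTuple,
      card_filter_not_isNontrivialTuple_tuplesUpTo, Fintype.card_fin]
    push_cast [Nat.cast_sub hM, Nat.cast_sub (Nat.le_mul_self k)]
    field_simp
    ring
  have hmain :
      Tendsto (fun M : ℕ => (k : ℝ) * (k - 1) * (1 - 2 / M)) atTop (𝓝 (k * (k - 1))) := by
    simpa using ((tendsto_const_div_atTop_nhds_zero_nat (2 : ℝ)).const_sub 1).const_mul
      ((k : ℝ) * (k - 1))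
  have hE : Tendsto (fun M => (E M : ℝ) / M) atTop (𝓝 0) := by
    have hbound := (tendsto_natSqrt_mul_natLog_pow_div (k - 1)).const_mul (k : ℝ)
    rw [mul_zero] at hbound
    refine squeeze_zero (fun M => by positivity) (fun M => ?_) hbound
    rw [← mul_div_assoc, ← Nat.cast_mul]
    gcongr
    simpa using card_filter_isNontrivialTuple_tuplesUpTo_le (ι := Fin k) M
  have hlim := hmain.add hE
  rw [add_zero] at hlim
  refine hlim.congr' ?_
  filter_upwards [eventually_ge_atTop 2] with M hM
  exact (hsplit M hM).symm

theorem average_order_Nk (k : ℕ) (hk : 2 ≤ k) :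
    Filter.Tendsto (fun M : ℕ => (∑ a ∈ Finset.Icc 3 M, (Nk k a : ℝ)) / M)
      Filter.atTop (nhds ((k : ℝ) * ((k : ℝ) - 1))) :=
  average_order_Nk_general k
end

section
/- For every fixed integer k ≥ 2 there is a constant C > 0 such that for all M ≥ 3, |Σ_{2 ≤ a ≤ M} N_k(a) − (C(k,2) + k(k-1)(M-2))| ≤ C · M^{1/2} · (log M)^{k-1}, where C(k,2) = k(k-1)/2 is the binomial coefficient. -/
open Finset

namespace Nat

theorem choose_le_choose_of_le_of_le_sub {n r p : ℕ} (hrp : r ≤ p) (hpn : p ≤ n - r) :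
    n.choose r ≤ n.choose p := by
  wlog hp : p ≤ n / 2 generalizing p
  · rw [← choose_symm (by omega : p ≤ n)]
    exact this (by omega) (by omega) (by omega)
  induction p, hrp using Nat.le_induction with
  | base => rfl
  | succ p _ ih =>
    exact (ih (by omega) (by omega)).trans (choose_le_succ_of_lt_half_left (by omega))

theorem two_pow_le_choose {n p : ℕ} (h : 2 * p ≤ n) : 2 ^ p ≤ n.choose p := by
  induction p generalizing n with
  | zero => simp
  | succ p ih =>
    obtain ⟨n, rfl⟩ : ∃ m, n = m + 1 := ⟨n - 1, by omega⟩
    refine Nat.le_of_mul_le_mul_right (c := p + 1) ?_ p.succ_pos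
    rw [← add_one_mul_choose_eq]
    calc 2 ^ (p + 1) * (p + 1) = 2 ^ p * (2 * (p + 1)) := by ring
      _ ≤ n.choose p * (n + 1) := Nat.mul_le_mul (ih (by omega)) (by omega)
      _ = _ := by ring

theorem self_le_choose {n p : ℕ} (hp : 1 ≤ p) (hpn : p < n) : n ≤ n.choose p := by
  simpa using choose_le_choose_of_le_of_le_sub hp (by omega : p ≤ n - 1)

theorem sq_le_four_mul_add_choose {a b : ℕ} (ha : 2 ≤ a) (hb : 2 ≤ b) :
    (a + b) ^ 2 ≤ 4 * (a + b).choose a := by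
  have h := choose_le_choose_of_le_of_le_sub ha (by omega : a ≤ a + b - 2)
  have h2 := choose_succ_right_eq (a + b) 1
  obtain ⟨c, hc⟩ : ∃ c, a + b = c + 3 := ⟨a + b - 3, by omega⟩
  rw [hc, choose_one_right, show c + 3 - 1 = c + 2 by omega] at h2
  rw [hc] at h ⊢
  nlinarith

variable {α : Type*} [DecidableEq α] {s : Finset α} {f : α → ℕ} {i j : α}

theorem multinomial_eq_choose_mul (hi : i ∈ s) :
    multinomial s f = (∑ x ∈ s, f x).choose (f i) * multinomial (s.erase i) f := by
  rw [← insert_erase hi, multinomial_insert (notMem_erase i s), sum_insert (notMem_erase i s),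
    erase_insert (notMem_erase i s)]

theorem choose_le_multinomial (hi : i ∈ s) : (∑ x ∈ s, f x).choose (f i) ≤ multinomial s f := by
  rw [multinomial_eq_choose_mul hi]
  exact Nat.le_mul_of_pos_right _ (multinomial_pos _ _)

theorem choose_mul_choose_le_multinomial (hi : i ∈ s) (hj : j ∈ s) (hij : i ≠ j) :
    (∑ x ∈ s, f x).choose (f i) * ((∑ x ∈ s, f x) - f i).choose (f j) ≤ multinomial s f := by
  rw [multinomial_eq_choose_mul hi, ← Nat.eq_sub_of_add_eq (sum_erase_add s f hi)]
  exact Nat.mul_le_mul_left _ (choose_le_multinomial (mem_erase.2 ⟨hij.symm, hj⟩))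

theorem add_le_sum_of_ne (hi : i ∈ s) (hj : j ∈ s) (hij : i ≠ j) : f i + f j ≤ ∑ x ∈ s, f x := by
  rw [← sum_pair hij]
  exact sum_le_sum_of_subset (insert_subset hi (singleton_subset_iff.2 hj))

theorem multinomial_filter_ne_zero : multinomial (s.filter (f · ≠ 0)) f = multinomial s f :=
  multinomial_congr_of_sdiff (filter_subset _ _) (by simp +contextual) (fun _ _ => rfl)

theorem sum_le_multinomial (hi : i ∈ s) (hj : j ∈ s) (hij : i ≠ j) (hfi : f i ≠ 0)
    (hfj : f j ≠ 0) : ∑ x ∈ s, f x ≤ multinomial s f := by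
  have := add_le_sum_of_ne (f := f) hi hj hij
  exact (self_le_choose (by omega) (by omega)).trans (choose_le_multinomial hi)

theorem two_pow_le_multinomial (hi : i ∈ s) (hj : j ∈ s) (hij : i ≠ j) (hji : f j ≤ f i) :
    2 ^ f j ≤ multinomial s f := by
  have := add_le_sum_of_ne (f := f) hi hj hij
  exact (two_pow_le_choose (by omega)).trans (choose_le_multinomial hj)

theorem sq_sum_le_two_mul_multinomial_of_ne_zero {l : α} (hi : i ∈ s) (hj : j ∈ s) (hl : l ∈ s)
    (hij : i ≠ j) (hil : i ≠ l) (hjl : j ≠ l) (hfi : f i ≠ 0) (hfj : f j ≠ 0) (hfl : f l ≠ 0)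
    (hle : f i ≤ f j) : (∑ x ∈ s, f x) ^ 2 ≤ 2 * multinomial s f := by
  set n := ∑ x ∈ s, f x
  have hn : f i + (f j + f l) ≤ n := by
    rw [← sum_pair hjl, ← sum_insert (by simp [hij, hil])]
    exact sum_le_sum_of_subset (by simp [insert_subset_iff, hi, hj, hl])
  have h := (Nat.mul_le_mul (self_le_choose (n := n) (p := f i) (by omega) (by omega))
    (self_le_choose (n := n - f i) (p := f j) (by omega) (by omega))).trans
    (choose_mul_choose_le_multinomial hi hj hij)
  have : n ≤ 2 * (n - f i) := by omega
  nlinarith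

theorem exists_pair_ne_zero_of_two_le_multinomial (h : 2 ≤ multinomial s f) :
    ∃ i ∈ s, ∃ j ∈ s, i ≠ j ∧ f i ≠ 0 ∧ f j ≠ 0 := by
  rw [← multinomial_filter_ne_zero] at h
  have hS : 1 < #(s.filter (f · ≠ 0)) := by
    by_contra! hS
    rcases Nat.le_one_iff_eq_zero_or_eq_one.1 hS with h0 | h1
    · simp [Finset.card_eq_zero.1 h0] at h
    · obtain ⟨a, ha⟩ := Finset.card_eq_one.1 h1
      simp [ha] at h
  obtain ⟨i, j, hi, hj, hij⟩ := one_lt_card_iff.1 hS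
  rw [mem_filter] at hi hj
  exact ⟨i, hi.1, j, hj.1, hij, hi.2, hj.2⟩

variable {ι : Type*} [DecidableEq ι]

theorem sum_single_add_single [Fintype ι] (i j : ι) (a b : ℕ) :
    ∑ x, (Pi.single i a + Pi.single j b : ι → ℕ) x = a + b := by
  simp [sum_add_distrib]

theorem multinomial_single_add_single [Fintype ι] {i j : ι} (hij : i ≠ j) (a b : ℕ) :
    multinomial univ (Pi.single i a + Pi.single j b) = (a + b).choose a := by
  rw [← multinomial_congr_of_sdiff (subset_univ {i, j}) ?_ (fun _ _ => rfl),
    binomial_eq_choose hij]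
  · simp [hij, hij.symm]
  · intro x hx
    simp only [mem_sdiff, mem_univ, mem_insert, mem_singleton, true_and, not_or] at hx
    simp [hx.1, hx.2]

theorem multinomial_single_one_add_single [Fintype ι] {i j : ι} (hij : i ≠ j) (t : ℕ) :
    multinomial univ (Pi.single i 1 + Pi.single j t) = t + 1 := by
  rw [multinomial_single_add_single hij, add_comm, choose_one_right]

theorem sq_sum_le_four_mul_multinomial_single_add_single [Fintype ι] {i j : ι} (hij : i ≠ j)
    {a b : ℕ} (ha : 2 ≤ a) (hb : 2 ≤ b) :
    (∑ x, (Pi.single i a + Pi.single j b : ι → ℕ) x) ^ 2 ≤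
      4 * multinomial univ (Pi.single i a + Pi.single j b) := by
  rw [sum_single_add_single, multinomial_single_add_single hij]
  exact sq_le_four_mul_add_choose ha hb

theorem eq_of_single_one_add_single_eq {i j i' j' : ι} {t t' : ℕ} (hij : i ≠ j)
    (hij' : i' ≠ j') (ht : 2 ≤ t)
    (h : (Pi.single i 1 + Pi.single j t : ι → ℕ) = Pi.single i' 1 + Pi.single j' t') :
    i = i' ∧ j = j' ∧ t = t' := by
  have hi := congrFun h i
  have hj := congrFun h j
  have hi' := congrFun h i'
  simp only [Pi.add_apply, Pi.single_apply] at hi hj hi'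
  grind

theorem eq_single_add_single_of_forall_ne {m : ι → ℕ} {i j : ι} (hij : i ≠ j)
    (h : ∀ x, x ≠ i → x ≠ j → m x = 0) : m = Pi.single i (m i) + Pi.single j (m j) := by
  ext x
  by_cases hxi : x = i
  · subst hxi; simp [hij]
  by_cases hxj : x = j
  · subst hxj; simp [hxi]
  · simp [hxi, hxj, h x hxi hxj]

theorem exists_forall_ne_two_pow_le_multinomial [Fintype ι] [Nonempty ι] (m : ι → ℕ) :
    ∃ i, ∀ j ≠ i, 2 ^ m j ≤ multinomial univ m := by
  obtain ⟨i, hi⟩ := Finite.exists_max m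
  exact ⟨i, fun j hj => two_pow_le_multinomial (mem_univ i) (mem_univ j) hj.symm (hi j)⟩

theorem eq_single_one_add_single_or_sq_sum_le [Fintype ι] (m : ι → ℕ)
    (h : 2 ≤ multinomial univ m) :
    (∃ i j, i ≠ j ∧ m = Pi.single i 1 + Pi.single j (m j)) ∨
      (∑ i, m i) ^ 2 ≤ 4 * multinomial univ m := by
  set S := univ.filter (m · ≠ 0)
  have hmS : ∀ x, x ∈ S ↔ m x ≠ 0 := by simp [S]
  have hcard : 1 < #S := by
    obtain ⟨i, -, j, -, hij, hi, hj⟩ := exists_pair_ne_zero_of_two_le_multinomial h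
    exact one_lt_card_iff.2 ⟨i, j, (hmS i).2 hi, (hmS j).2 hj, hij⟩
  rcases (show 2 ≤ #S from hcard).eq_or_lt with h2 | h3
  · obtain ⟨i, j, hij, hSij⟩ := card_eq_two.1 h2.symm
    have hm := eq_single_add_single_of_forall_ne (m := m) hij fun x hxi hxj => by
      simpa [hSij, hxi, hxj] using (hmS x).not
    have hi : m i ≠ 0 := (hmS i).1 (by simp [hSij])
    have hj : m j ≠ 0 := (hmS j).1 (by simp [hSij])
    by_cases hi1 : m i = 1
    · exact .inl ⟨i, j, hij, by rwa [hi1] at hm⟩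
    by_cases hj1 : m j = 1
    · exact .inl ⟨j, i, hij.symm, by rwa [hj1, add_comm] at hm⟩
    rw [hm]
    exact .inr (sq_sum_le_four_mul_multinomial_single_add_single hij (by omega) (by omega))
  · obtain ⟨a, b, c, ha, hb, hc, hab, hac, hbc⟩ := two_lt_card_iff.1 h3
    rw [hmS] at ha hb hc
    suffices (∑ i, m i) ^ 2 ≤ 2 * multinomial univ m from .inr (by omega)
    rcases le_total (m a) (m b) with hle | hle
    · exact sq_sum_le_two_mul_multinomial_of_ne_zero (mem_univ a) (mem_univ b) (mem_univ c)
        hab hac hbc ha hb hc hle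
    · exact sq_sum_le_two_mul_multinomial_of_ne_zero (mem_univ b) (mem_univ a) (mem_univ c)
        hab.symm hbc hac hb ha hc hle

end Nat

theorem Finset.card_le_of_forall_exists_le_of_forall_ne_le {ι : Type*} [Fintype ι] [DecidableEq ι]
    {s : Finset (ι → ℕ)} {N L : ℕ} (h : ∀ m ∈ s, ∃ i, m i ≤ N ∧ ∀ j ≠ i, m j ≤ L) :
    #s ≤ Fintype.card ι * ((N + 1) * (L + 1) ^ (Fintype.card ι - 1)) := by
  let box (i : ι) : Finset (ι → ℕ) :=
    Fintype.piFinset fun j => if j = i then range (N + 1) else range (L + 1)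
  have hbox (i : ι) : #(box i) = (N + 1) * (L + 1) ^ (Fintype.card ι - 1) := by
    simp [box, apply_ite, prod_ite, filter_ne', filter_eq', card_univ]
  calc #s ≤ #(univ.biUnion box) := card_le_card fun m hm => by
        obtain ⟨i, hi, hj⟩ := h m hm
        refine mem_biUnion.2 ⟨i, mem_univ i, Fintype.mem_piFinset.2 fun j => ?_⟩
        by_cases hji : j = i
        · simp [hji, hi]
        · simp [hji, hj j hji]
    _ ≤ ∑ i, #(box i) := card_biUnion_le
    _ = _ := by simp [hbox]

section Tuples

variable (ι : Type*) [Fintype ι] [DecidableEq ι] (M : ℕ)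

def tuplesIcc : Finset (ι → ℕ) :=
  (Fintype.piFinset fun _ => range (M + 1)).filter fun m => Nat.multinomial univ m ∈ Icc 2 M

-- The case `t = 1` of `singleOneAddSingles`, kept apart because there `(i, j)` and `(j, i)`
-- give the same tuple.
def indicatorPairs : Finset (ι → ℕ) :=
  (univ.powersetCard 2).image fun s => ∑ i ∈ s, Pi.single i 1

def singleOneAddSingles : Finset (ι → ℕ) :=
  (univ.offDiag ×ˢ Icc 2 (M - 1)).image fun p => Pi.single p.1.1 1 + Pi.single p.1.2 p.2

def trivialTuples : Finset (ι → ℕ) :=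
  indicatorPairs ι ∪ singleOneAddSingles ι M

variable {ι M}

theorem mem_tuplesIcc {m : ι → ℕ} : m ∈ tuplesIcc ι M ↔ Nat.multinomial univ m ∈ Icc 2 M := by
  refine ⟨fun h => (mem_filter.1 h).2, fun h => mem_filter.2 ⟨?_, h⟩⟩
  obtain ⟨i, -, j, -, hij, hi, hj⟩ := Nat.exists_pair_ne_zero_of_two_le_multinomial (mem_Icc.1 h).1
  have := Nat.sum_le_multinomial (mem_univ i) (mem_univ j) hij hi hj
  exact Fintype.mem_piFinset.2 fun x => mem_range.2
    (by linarith [single_le_sum (fun y _ => Nat.zero_le (m y)) (mem_univ x), (mem_Icc.1 h).2])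

theorem multinomial_of_mem_indicatorPairs {m : ι → ℕ} (hm : m ∈ indicatorPairs ι) :
    Nat.multinomial univ m = 2 := by
  obtain ⟨s, hs, rfl⟩ := mem_image.1 hm
  obtain ⟨i, j, hij, rfl⟩ := card_eq_two.1 (mem_powersetCard.1 hs).2
  rw [sum_pair hij, Nat.multinomial_single_one_add_single hij]

theorem multinomial_of_mem_singleOneAddSingles {m : ι → ℕ} (hm : m ∈ singleOneAddSingles ι M) :
    Nat.multinomial univ m ∈ Icc 3 M := by
  obtain ⟨⟨⟨i, j⟩, t⟩, hp, rfl⟩ := mem_image.1 hm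
  simp only [mem_product, mem_offDiag, mem_Icc] at hp
  rw [Nat.multinomial_single_one_add_single hp.1.2.2, mem_Icc]
  omega

theorem card_indicatorPairs : #(indicatorPairs ι) = (Fintype.card ι).choose 2 := by
  rw [indicatorPairs, card_image_of_injective _ fun s t hst => ?_, card_powersetCard, card_univ]
  ext x
  have h := congrFun hst x
  simp only [Finset.sum_apply, Pi.single_apply, sum_ite_eq] at h
  split_ifs at h <;> tauto

theorem card_singleOneAddSingles :
    #(singleOneAddSingles ι M) = (Fintype.card ι * Fintype.card ι - Fintype.card ι) * (M - 2) := by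
  rw [singleOneAddSingles, card_image_of_injOn fun p hp q hq hpq => ?_, card_product, offDiag_card,
    card_univ, Nat.card_Icc, show M - 1 + 1 - 2 = M - 2 by omega]
  simp only [coe_product, Set.mem_prod, mem_coe, mem_offDiag, mem_Icc] at hp hq
  obtain ⟨h1, h2, h3⟩ := Nat.eq_of_single_one_add_single_eq hp.1.2.2 hq.1.2.2 hp.2.1 hpq
  exact Prod.ext (Prod.ext h1 h2) h3

theorem card_trivialTuples :
    #(trivialTuples ι M) = (Fintype.card ι).choose 2 +
      (Fintype.card ι * Fintype.card ι - Fintype.card ι) * (M - 2) := by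
  rw [trivialTuples, card_union_of_disjoint, card_indicatorPairs, card_singleOneAddSingles]
  refine disjoint_left.2 fun m h2 h3 => ?_
  have := mem_Icc.1 (multinomial_of_mem_singleOneAddSingles h3)
  rw [multinomial_of_mem_indicatorPairs h2] at this
  omega

theorem trivialTuples_subset_tuplesIcc (hM : 2 ≤ M) : trivialTuples ι M ⊆ tuplesIcc ι M := by
  refine union_subset (fun m hm => mem_tuplesIcc.2 ?_) (fun m hm => mem_tuplesIcc.2 ?_)
  · rw [multinomial_of_mem_indicatorPairs hm, mem_Icc]
    omega
  · have := mem_Icc.1 (multinomial_of_mem_singleOneAddSingles hm)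
    exact mem_Icc.2 ⟨by omega, this.2⟩

theorem mem_trivialTuples {m : ι → ℕ} {i j : ι} (hij : i ≠ j)
    (hm : m = Pi.single i 1 + Pi.single j (m j)) (hM : Nat.multinomial univ m ∈ Icc 2 M) :
    m ∈ trivialTuples ι M := by
  have hval := Nat.multinomial_single_one_add_single hij (m j)
  rw [← hm] at hval
  rw [hval, mem_Icc] at hM
  rcases (show 1 ≤ m j by omega).eq_or_lt with h1 | h2
  · refine mem_union_left _ (mem_image.2 ⟨{i, j}, ?_, ?_⟩)
    · exact mem_powersetCard.2 ⟨subset_univ _, card_pair hij⟩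
    · rw [sum_pair hij, hm, ← h1]
  · refine mem_union_right _ (mem_image.2 ⟨((i, j), m j), ?_, hm.symm⟩)
    simp only [mem_product, mem_offDiag, mem_univ, mem_Icc]
    exact ⟨⟨trivial, trivial, hij⟩, by omega, by omega⟩

theorem sq_sum_le_of_mem_tuplesIcc_sdiff {m : ι → ℕ} (hm : m ∈ tuplesIcc ι M \ trivialTuples ι M) :
    (∑ i, m i) ^ 2 ≤ 4 * M := by
  obtain ⟨hT, hA⟩ := mem_sdiff.1 hm
  have hmult := mem_tuplesIcc.1 hT
  rcases Nat.eq_single_one_add_single_or_sq_sum_le m (mem_Icc.1 hmult).1 with ⟨i, j, hij, hm⟩ | h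
  · exact absurd (mem_trivialTuples hij hm hmult) hA
  · exact h.trans (by linarith [(mem_Icc.1 hmult).2])

theorem card_tuplesIcc_sdiff_le :
    #(tuplesIcc ι M \ trivialTuples ι M) ≤
      Fintype.card ι * ((Nat.sqrt (4 * M) + 1) * (Nat.log 2 M + 1) ^ (Fintype.card ι - 1)) := by
  refine card_le_of_forall_exists_le_of_forall_ne_le fun m hm => ?_
  have hmult := mem_Icc.1 (mem_tuplesIcc.1 (mem_sdiff.1 hm).1)
  obtain ⟨i, -⟩ := Nat.exists_pair_ne_zero_of_two_le_multinomial hmult.1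
  have : Nonempty ι := ⟨i⟩
  obtain ⟨i, hi⟩ := Nat.exists_forall_ne_two_pow_le_multinomial m
  have hmi : m i ^ 2 ≤ (∑ x, m x) ^ 2 :=
    Nat.pow_le_pow_left (single_le_sum (fun y _ => Nat.zero_le (m y)) (mem_univ i)) 2
  exact ⟨i, Nat.le_sqrt'.2 (hmi.trans (sq_sum_le_of_mem_tuplesIcc_sdiff hm)),
    fun j hj => Nat.le_log_of_pow_le one_lt_two ((hi j hj).trans hmult.2)⟩

end Tuples

theorem sum_Nk_eq_card_tuplesIcc (k M : ℕ) : ∑ a ∈ Icc 2 M, Nk k a = #(tuplesIcc (Fin k) M) := by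
  rw [card_eq_sum_card_fiberwise fun m hm => mem_tuplesIcc.1 hm]
  refine sum_congr rfl fun a ha => ?_
  rw [Nk, ← Set.ncard_coe_finset]
  congr 1
  ext m
  simp only [coe_filter]
  exact ⟨fun h => ⟨mem_tuplesIcc.2 (h ▸ ha), h⟩, fun h => h.2⟩

theorem natSqrt_four_mul_add_one_le {M : ℕ} (hM : 1 ≤ M) :
    (Nat.sqrt (4 * M) + 1 : ℝ) ≤ 3 * √M := by
  have h1 : (1 : ℝ) ≤ √M := Real.one_le_sqrt.2 (by exact_mod_cast hM)
  have h2 : √((4 * M : ℕ) : ℝ) = 2 * √M := by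
    push_cast
    rw [Real.sqrt_mul zero_le_four, show (4 : ℝ) = 2 ^ 2 by norm_num, Real.sqrt_sq zero_le_two]
  linarith [h2 ▸ Real.nat_sqrt_le_real_sqrt (a := 4 * M)]

theorem natLog_two_add_one_le {M : ℕ} (hM : 3 ≤ M) : (Nat.log 2 M + 1 : ℝ) ≤ 3 * Real.log M := by
  have hM' : (3 : ℝ) ≤ M := by exact_mod_cast hM
  have h1 : 1 ≤ Real.log M := by
    rw [Real.le_log_iff_exp_le (by linarith)]
    linarith [Real.exp_one_lt_d9]
  have h2 : (Nat.log 2 M : ℝ) * Real.log 2 ≤ Real.log M := by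
    rw [← le_div_iff₀ (Real.log_pos one_lt_two)]
    exact_mod_cast Real.natLog_le_logb M 2
  nlinarith [Real.log_two_gt_d9]

theorem mul_natSqrt_mul_natLog_pow_le {k M : ℕ} (hM : 3 ≤ M) :
    (k : ℝ) * ((Nat.sqrt (4 * M) + 1) * (Nat.log 2 M + 1) ^ (k - 1)) ≤
      (k * 3 ^ k + 1) * √M * Real.log M ^ (k - 1) := by
  have hlog : 0 ≤ Real.log M := Real.log_nonneg (by exact_mod_cast (by omega : 1 ≤ M))
  have hk : (k : ℝ) * (3 * 3 ^ (k - 1)) ≤ k * 3 ^ k + 1 := by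
    rcases k with _ | k
    · norm_num
    · rw [Nat.add_sub_cancel, ← pow_succ']
      linarith
  calc (k : ℝ) * ((Nat.sqrt (4 * M) + 1) * (Nat.log 2 M + 1) ^ (k - 1))
      ≤ k * ((3 * √M) * (3 * Real.log M) ^ (k - 1)) := by
        gcongr
        · exact natSqrt_four_mul_add_one_le (by omega)
        · exact natLog_two_add_one_le hM
    _ = k * (3 * 3 ^ (k - 1)) * √M * Real.log M ^ (k - 1) := by ring
    _ ≤ (k * 3 ^ k + 1) * √M * Real.log M ^ (k - 1) := by gcongr

theorem sum_Nk_asymptotic_general (k : ℕ) :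
    ∃ C : ℝ, 0 < C ∧ ∀ M : ℕ, 3 ≤ M →
      |(∑ a ∈ Finset.Icc 2 M, (Nk k a : ℝ)) -
          ((k.choose 2 : ℝ) + (k : ℝ) * ((k : ℝ) - 1) * ((M : ℝ) - 2))| ≤
        C * Real.sqrt M * (Real.log M) ^ (k - 1) := by
  refine ⟨k * 3 ^ k + 1, by positivity, fun M hM => ?_⟩
  have hcard := card_sdiff_add_card_eq_card (trivialTuples_subset_tuplesIcc (ι := Fin k) (M := M)
    (by omega))
  have hbad := card_tuplesIcc_sdiff_le (ι := Fin k) (M := M)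
  rw [card_trivialTuples, Fintype.card_fin] at hcard
  rw [Fintype.card_fin] at hbad
  rw [← Nat.cast_sum, sum_Nk_eq_card_tuplesIcc, ← hcard]
  push_cast [Nat.cast_sub (Nat.le_mul_self k), Nat.cast_sub (by omega : 2 ≤ M)]
  set B := #(tuplesIcc (Fin k) M \ trivialTuples (Fin k) M)
  rw [show (B : ℝ) + (k.choose 2 + (k * k - k) * (M - 2)) - (k.choose 2 + k * (k - 1) * (M - 2)) = B
    by ring, abs_of_nonneg (Nat.cast_nonneg _)]
  exact (Nat.cast_le.2 hbad).trans (by exact_mod_cast mul_natSqrt_mul_natLog_pow_le hM)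

theorem sum_Nk_asymptotic (k : ℕ) (hk : 2 ≤ k) :
    ∃ C : ℝ, 0 < C ∧ ∀ M : ℕ, 3 ≤ M →
      |(∑ a ∈ Finset.Icc 2 M, (Nk k a : ℝ)) -
          ((k.choose 2 : ℝ) + (k : ℝ) * ((k : ℝ) - 1) * ((M : ℝ) - 2))| ≤
        C * Real.sqrt M * (Real.log M) ^ (k - 1) :=
  sum_Nk_asymptotic_general k
end

section
/- For every fixed integer k > 2 there exist a constant c > 0 and a threshold x_0 such that for all real x ≥ x_0, the number of integers a with 1 < a ≤ x and N_k(a) ≥ k! is at least c · x^{2/((k-1)(k-2))}. -/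
open Finset Nat

namespace Nat

theorem multinomial_comp_equiv {ι : Type*} [Fintype ι] (f : ι → ℕ) (σ : ι ≃ ι) :
    multinomial univ (f ∘ σ) = multinomial univ f := by
  simp only [multinomial, Function.comp_apply, Equiv.sum_comp σ f,
    Equiv.prod_comp σ fun i => (f i)!]

theorem multinomial_eq_one_of_sum_eq_zero {α : Type*} {s : Finset α} {f : α → ℕ}
    (h : ∑ i ∈ s, f i = 0) : multinomial s f = 1 := by
  have hspec := multinomial_spec s f
  rw [h, factorial_zero] at hspec
  exact eq_one_of_mul_eq_one_left hspec

theorem lt_multinomial_of_one_lt {α : Type*} {s : Finset α} {f : α → ℕ} {i : α} (hi : i ∈ s)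
    (h : 1 < multinomial s f) : f i < multinomial s f := by
  classical
  rw [← insert_erase hi, multinomial_insert (notMem_erase i s)] at h ⊢
  set r := ∑ j ∈ s.erase i, f j
  rcases Nat.eq_zero_or_pos r with hr0 | hrpos
  · rw [multinomial_eq_one_of_sum_eq_zero hr0, hr0] at h
    simp at h
  · calc f i < (f i + 1).choose (f i) := by rw [choose_succ_self_right]; exact lt_add_one _
      _ ≤ (f i + r).choose (f i) := choose_le_choose _ (by omega)
      _ ≤ _ := Nat.le_mul_of_pos_right _ (multinomial_pos _ _)

theorem multinomial_univ_cons {n : ℕ} (x : ℕ) (f : Fin n → ℕ) :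
    multinomial univ (Fin.cons x f : Fin (n + 1) → ℕ) =
      (x + ∑ i, f i).choose x * multinomial univ f := by
  rw [Fin.univ_succ, multinomial_cons]
  simp [multinomial, sum_map, prod_map]

theorem strictMono_add_choose {s : ℕ} (hs : s ≠ 0) : StrictMono fun x => (x + s).choose s := by
  refine strictMono_nat_of_lt_succ fun x => ?_
  obtain ⟨t, rfl⟩ := exists_eq_succ_of_ne_zero hs
  rw [show x + 1 + (t + 1) = x + (t + 1) + 1 by omega, choose_succ_succ']
  exact lt_add_of_pos_left _ (choose_pos (by omega))

theorem strictMono_multinomial_univ_cons {n : ℕ} (f : Fin n → ℕ) (hf : ∑ i, f i ≠ 0) (c : ℕ) :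
    StrictMono fun x => multinomial univ (Fin.cons (x + c) f : Fin (n + 1) → ℕ) := by
  intro x y hxy
  simp only [multinomial_univ_cons]
  rw [choose_symm_add, choose_symm_add]
  exact (strictMono_add_choose hf).mul_const (multinomial_pos _ _) (by omega : x + c < y + c)

theorem multinomial_univ_cons_add_le {n : ℕ} (f : Fin n → ℕ) (c : ℕ) {x : ℕ} (hx : 1 ≤ x) :
    multinomial univ (Fin.cons (x + c) f : Fin (n + 1) → ℕ) ≤
      multinomial univ f * (c + ∑ i, f i + 1) ^ (∑ i, f i) * x ^ (∑ i, f i) := by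
  set S := ∑ i, f i
  rw [multinomial_univ_cons, choose_symm_add]
  calc (x + c + S).choose S * multinomial univ f
      ≤ ((c + S + 1) * x) ^ S * multinomial univ f := by
        gcongr
        exact (choose_le_pow _ _).trans (Nat.pow_le_pow_left (by nlinarith) _)
    _ = _ := by rw [mul_pow]; ring

end Nat

theorem factorial_le_Nk {k : ℕ} {m : Fin k → ℕ} (hm : Function.Injective m)
    (h : 1 < multinomial univ m) : k ! ≤ Nk k (multinomial univ m) := by
  -- `Set.ncard` is `0` on infinite sets, so the fibre must be shown to be finite.
  have hfin : {m' : Fin k → ℕ | multinomial univ m' = multinomial univ m}.Finite := by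
    refine (Set.Finite.pi fun _ => Set.finite_Iio (multinomial univ m)).subset ?_
    intro m' (hm' : multinomial univ m' = multinomial univ m) i _
    exact hm' ▸ lt_multinomial_of_one_lt (mem_univ i) (hm' ▸ h)
  have hperm : Function.Injective fun σ : Equiv.Perm (Fin k) => m ∘ σ :=
    hm.comp_left.comp Equiv.coe_fn_injective
  calc k ! = (Set.range fun σ : Equiv.Perm (Fin k) => m ∘ σ).ncard := by
        rw [Set.ncard_range_of_injective hperm, Nat.card_perm, Nat.card_eq_fintype_card,
          Fintype.card_fin]
    _ ≤ Nk k (multinomial univ m) := by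
        refine Set.ncard_le_ncard ?_ hfin
        rintro _ ⟨σ, rfl⟩
        exact multinomial_comp_equiv m σ

theorem le_card_filter_Ioc_of_strictMono {P : ℕ → Prop} [DecidablePred P] {a : ℕ → ℕ}
    (ha : StrictMono a) (ha₀ : 0 < a 0) (hP : ∀ n, 1 < a n → P (a n)) {B T : ℕ}
    (hB : ∀ n, 1 ≤ n → a n ≤ B * n ^ T) {N m : ℕ} (hN : B * N ^ T ≤ m) :
    N ≤ #{x ∈ Ioc 1 m | P x} := by
  have hmaps : (Icc 1 N).image a ⊆ {x ∈ Ioc 1 m | P x} := by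
    simp only [subset_iff, mem_image, mem_Icc, mem_filter, mem_Ioc]
    rintro _ ⟨n, ⟨hn₁, hnN⟩, rfl⟩
    have h1 : 1 < a n := lt_of_le_of_lt ha₀ (ha (by omega))
    refine ⟨⟨h1, ?_⟩, hP n h1⟩
    calc a n ≤ B * n ^ T := hB n hn₁
      _ ≤ B * N ^ T := by gcongr
      _ ≤ m := hN
  calc N = #((Icc 1 N).image a) := by rw [card_image_of_injective _ ha.injective]; simp
    _ ≤ _ := card_le_card hmaps

theorem exists_mul_rpow_inv_le_of_pow_le {g : ℕ → ℕ} {B T : ℕ} (hB : 0 < B) (hT : T ≠ 0)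
    (hg : ∀ N m, B * N ^ T ≤ m → N ≤ g m) :
    ∃ c : ℝ, 0 < c ∧ ∃ x₀ : ℝ, ∀ x : ℝ, x₀ ≤ x → c * x ^ (T : ℝ)⁻¹ ≤ g ⌊x⌋₊ := by
  refine ⟨((B : ℝ) ^ (T : ℝ)⁻¹)⁻¹ / 2, by positivity, 2 ^ T * B, fun x hx => ?_⟩
  have hBr : (0 : ℝ) < B := by exact_mod_cast hB
  have hx₀ : 0 ≤ x := le_trans (by positivity) hx
  have hxB : (2 : ℝ) ^ T ≤ x / B := (le_div_iff₀ hBr).2 hx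
  set y := (x / B) ^ (T : ℝ)⁻¹ with hy_def
  have hy : 2 ≤ y := by
    calc (2 : ℝ) = ((2 : ℝ) ^ T) ^ (T : ℝ)⁻¹ := (Real.pow_rpow_inv_natCast (by norm_num) hT).symm
      _ ≤ y := Real.rpow_le_rpow (by positivity) hxB (by positivity)
  have hyT : y ^ T = x / B := Real.rpow_inv_natCast_pow (by positivity) hT
  have hN : B * ⌊y⌋₊ ^ T ≤ ⌊x⌋₊ := by
    refine Nat.le_floor ?_
    push_cast
    calc (B : ℝ) * (⌊y⌋₊ : ℝ) ^ T ≤ B * y ^ T := by gcongr; exact Nat.floor_le (by positivity)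
      _ = x := by rw [hyT]; field_simp
  calc ((B : ℝ) ^ (T : ℝ)⁻¹)⁻¹ / 2 * x ^ (T : ℝ)⁻¹ = y / 2 := by
        rw [hy_def, Real.div_rpow hx₀ hBr.le]; ring
    _ ≤ y - 1 := by linarith
    _ ≤ ⌊y⌋₊ := (Nat.sub_one_lt_floor y).le
    _ ≤ g ⌊x⌋₊ := by exact_mod_cast hg _ _ hN

theorem many_large_Nk (k : ℕ) (hk : 2 < k) :
    ∃ c : ℝ, 0 < c ∧ ∃ x₀ : ℝ, ∀ x : ℝ, x₀ ≤ x →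
      c * x ^ ((2 : ℝ) / (((k : ℝ) - 1) * ((k : ℝ) - 2))) ≤
        (((Finset.Ioc 1 ⌊x⌋₊).filter (fun a => Nat.factorial k ≤ Nk k a)).card : ℝ) := by
  obtain ⟨j, rfl⟩ : ∃ j, k = j + 1 := ⟨k - 1, by omega⟩
  set T := ∑ i : Fin j, (i : ℕ)
  have hT : T * 2 = j * (j - 1) := by
    rw [← sum_range_id_mul_two, ← Fin.sum_univ_eq_sum_range]
  have hT₀ : T ≠ 0 := by
    have : 2 * 1 ≤ j * (j - 1) := Nat.mul_le_mul (by omega) (by omega)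
    omega
  have hexp : (2 : ℝ) / ((((j + 1 : ℕ) : ℝ) - 1) * (((j + 1 : ℕ) : ℝ) - 2)) = (T : ℝ)⁻¹ := by
    have hTr := congrArg (Nat.cast : ℕ → ℝ) hT
    push_cast [Nat.cast_sub (by omega : 1 ≤ j)] at hTr
    rw [show (((j + 1 : ℕ) : ℝ) - 1) * (((j + 1 : ℕ) : ℝ) - 2) = T * 2 by push_cast; rw [hTr]; ring]
    field_simp
  have hinj : ∀ n, Function.Injective (Fin.cons (n + j) Fin.val : Fin (j + 1) → ℕ) := fun n =>
    Fin.cons_injective_iff.2 ⟨by simp, Fin.val_injective⟩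
  obtain ⟨c, hc, x₀, hcount⟩ := exists_mul_rpow_inv_le_of_pow_le
    (g := fun m => #{x ∈ Ioc 1 m | (j + 1)! ≤ Nk (j + 1) x})
    (Nat.mul_pos (multinomial_pos _ Fin.val) (Nat.pow_pos (by omega))) hT₀
    fun N m hN => le_card_filter_Ioc_of_strictMono (strictMono_multinomial_univ_cons _ hT₀ j)
      (multinomial_pos _ _) (fun n => factorial_le_Nk (hinj n))
      (fun n hn => multinomial_univ_cons_add_le _ j hn) hN
  exact ⟨c, hc, x₀, fun x hx => hexp ▸ hcount x hx⟩
end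

section
/- For every fixed integer k ≥ 4, the set of integers a > 1 with N_k(a) ≥ 2·k! + k(k-1) is infinite. -/
open Finset Function
open scoped Nat

namespace Nat

theorem self_le_choose_s11 {n r : ℕ} (hr : 0 < r) (hrn : r < n) : n ≤ n.choose r := by
  induction n generalizing r with
  | zero => omega
  | succ n ih =>
    obtain ⟨r, rfl⟩ : ∃ r', r = r' + 1 := ⟨r - 1, by omega⟩
    rcases r.eq_zero_or_pos with rfl | hr
    · simp
    · have := ih hr (by omega)
      have := choose_pos (show r + 1 ≤ n by omega)
      rw [choose_succ_succ']
      omega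

theorem factorial_shift_of_succ_mul_succ_eq {a b c d : ℕ}
    (h : (a + 1) * (c + 1) = (b + 1) * (d + 1)) :
    (a + 1)! * b ! * (c + 1)! * d ! = a ! * (b + 1)! * c ! * (d + 1)! := by
  simp only [factorial_succ]
  linear_combination (a ! * b ! * c ! * d !) * h

theorem multinomial_append_congr {m n : ℕ} {u v : Fin m → ℕ} (w : Fin n → ℕ)
    (hsum : ∑ i, u i = ∑ i, v i) (hprod : ∏ i, (u i)! = ∏ i, (v i)!) :
    multinomial univ (Fin.append u w) = multinomial univ (Fin.append v w) := by
  simp only [multinomial, Fin.sum_univ_add, Fin.prod_univ_add, Fin.append_left,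
    Fin.append_right, hsum, hprod]

variable {ι : Type*} [Fintype ι]

theorem choose_le_multinomial_s11 (m : ι → ℕ) (i : ι) :
    (∑ j, m j).choose (m i) ≤ multinomial univ m := by
  classical
  rw [← insert_erase (mem_univ i), multinomial_insert (notMem_erase i _),
    sum_insert (notMem_erase i _)]
  exact Nat.le_mul_of_pos_right _ (multinomial_pos _ _)

theorem sum_le_multinomial_s11 {m : ι → ℕ} {i : ι} (h0 : 0 < m i) (hlt : m i < ∑ j, m j) :
    ∑ j, m j ≤ multinomial univ m :=
  (self_le_choose_s11 h0 hlt).trans (choose_le_multinomial_s11 m i)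

theorem multinomial_le_one_of_apply_eq_sum {m : ι → ℕ} {i : ι} (h : m i = ∑ j, m j) :
    multinomial univ m ≤ 1 := by
  have hspec := multinomial_spec univ m
  have hle : (m i)! ≤ ∏ j, (m j)! :=
    single_le_prod' (f := fun j => (m j)!) (fun j _ => (m j).factorial_pos) (mem_univ i)
  rw [h] at hle
  by_contra! hM
  have := Nat.mul_le_mul hle hM
  have := factorial_pos (∑ j, m j)
  omega

theorem apply_le_multinomial {m : ι → ℕ} (hm : 1 < multinomial univ m) (i : ι) :
    m i ≤ multinomial univ m := by
  rcases (m i).eq_zero_or_pos with h0 | h0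
  · omega
  rcases (single_le_sum (fun j _ => (m j).zero_le) (mem_univ i)).lt_or_eq with hlt | heq
  · exact hlt.le.trans (sum_le_multinomial_s11 h0 hlt)
  · exact absurd (multinomial_le_one_of_apply_eq_sum heq) (by omega)

theorem finite_setOf_multinomial_eq {a : ℕ} (ha : 1 < a) :
    {m : ι → ℕ | multinomial univ m = a}.Finite :=
  (Set.Finite.pi fun _ => Set.finite_Iic a).subset fun _ hm i _ =>
    hm ▸ apply_le_multinomial (hm ▸ ha) i

end Nat

section Rearrangements

variable {ι α : Type*}

def rearrangements (m : ι → α) : Set (ι → α) :=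
  Set.range fun σ : Equiv.Perm ι => m ∘ σ

theorem range_eq_of_mem_rearrangements {m f : ι → α} (hf : f ∈ rearrangements m) :
    Set.range f = Set.range m := by
  obtain ⟨σ, rfl⟩ := hf
  exact EquivLike.range_comp m σ

theorem finite_rearrangements [Finite ι] (m : ι → α) : (rearrangements m).Finite :=
  Set.finite_range _

theorem ncard_rearrangements [Fintype ι] {m : ι → α} (hm : Injective m) :
    (rearrangements m).ncard = (Fintype.card ι)! := by
  have hinj : Injective fun σ : Equiv.Perm ι => m ∘ σ := fun σ τ h =>
    Equiv.ext fun i => hm (congrFun h i)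
  rw [rearrangements, Set.ncard_range_of_injective hinj, Nat.card_perm, Nat.card_eq_fintype_card]

theorem Nat.multinomial_eq_of_mem_rearrangements [Fintype ι] {m f : ι → ℕ}
    (hf : f ∈ rearrangements m) : multinomial univ f = multinomial univ m := by
  obtain ⟨σ, rfl⟩ := hf
  simp only [multinomial, comp_apply, Equiv.sum_comp σ m, Equiv.prod_comp σ fun i => (m i)!]

end Rearrangements

section PairTuples

variable {ι : Type*} [DecidableEq ι]

def pairTuple (b : ℕ) (p : ι × ι) : ι → ℕ :=
  Pi.single p.1 1 + Pi.single p.2 b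

theorem multinomial_pairTuple [Fintype ι] (b : ℕ) {p : ι × ι} (hp : p.1 ≠ p.2) :
    Nat.multinomial univ (pairTuple b p) = b + 1 := by
  rw [← Nat.multinomial_congr_of_sdiff (subset_univ {p.1, p.2}) (f := pairTuple b p)
    (by simp +contextual [pairTuple]) (fun _ _ => rfl),
    Nat.binomial_one hp (by simp [pairTuple, hp.symm])]
  simp [pairTuple, hp]

theorem injOn_pairTuple {b : ℕ} (hb : 2 ≤ b) :
    Set.InjOn (pairTuple b) {p : ι × ι | p.1 ≠ p.2} := by
  rintro ⟨p₁, p₂⟩ hp ⟨q₁, q₂⟩ hq h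
  have h₁ := congrFun h p₁
  have h₂ := congrFun h p₂
  simp only [pairTuple, Pi.add_apply, Pi.single_apply] at h₁ h₂
  grind

theorem zero_mem_range_pairTuple [Fintype ι] (hι : 3 ≤ Fintype.card ι) (b : ℕ) (p : ι × ι) :
    0 ∈ Set.range (pairTuple b p) := by
  obtain ⟨r, -, hr⟩ := exists_mem_notMem_of_card_lt_card (s := {p.1, p.2}) (t := univ)
    (card_le_two.trans_lt hι)
  simp only [mem_insert, mem_singleton, not_or] at hr
  exact ⟨r, by simp [pairTuple, hr.1, hr.2]⟩

end PairTuples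

theorem le_ncard_setOf_multinomial_eq {ι : Type*} [Fintype ι] [DecidableEq ι]
    (hι : 3 ≤ Fintype.card ι) {x y : ι → ℕ} (hx : Injective x) (hy : Injective y)
    (hx0 : 0 ∉ Set.range x) (hy0 : 0 ∉ Set.range y) (hxy : Set.range x ≠ Set.range y)
    (hyx : Nat.multinomial univ y = Nat.multinomial univ x) (ha : 2 < Nat.multinomial univ x) :
    2 * (Fintype.card ι)! + Fintype.card ι * (Fintype.card ι - 1) ≤
      {m : ι → ℕ | Nat.multinomial univ m = Nat.multinomial univ x}.ncard := by
  obtain ⟨b, hb⟩ : ∃ b, Nat.multinomial univ x = b + 1 :=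
    ⟨_, (Nat.succ_pred_eq_of_pos (by omega)).symm⟩
  set P := pairTuple b '' {p : ι × ι | p.1 ≠ p.2}
  have hP : P.ncard = Fintype.card ι * (Fintype.card ι - 1) := by
    have hoff : {p : ι × ι | p.1 ≠ p.2} = ↑(univ : Finset ι).offDiag := by ext; simp
    rw [(injOn_pairTuple (by omega)).ncard_image, hoff, Set.ncard_coe_finset, offDiag_card,
      card_univ, Nat.mul_sub_one]
  have hRx := finite_rearrangements x
  have hRy := finite_rearrangements y
  have hdisj : Disjoint (rearrangements x) (rearrangements y) :=
    Set.disjoint_left.2 fun f hfx hfy => hxy <|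
      (range_eq_of_mem_rearrangements hfx).symm.trans (range_eq_of_mem_rearrangements hfy)
  have hdisjP : Disjoint (rearrangements x ∪ rearrangements y) P := by
    rw [Set.disjoint_left]
    rintro f hf ⟨p, -, rfl⟩
    have := zero_mem_range_pairTuple hι b p
    rcases hf with hf | hf <;> rw [range_eq_of_mem_rearrangements hf] at this <;> contradiction
  have hsub : rearrangements x ∪ rearrangements y ∪ P ⊆
      {m | Nat.multinomial univ m = Nat.multinomial univ x} := by
    rintro f ((hf | hf) | ⟨p, hp, rfl⟩)
    · exact Nat.multinomial_eq_of_mem_rearrangements hf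
    · exact (Nat.multinomial_eq_of_mem_rearrangements hf).trans hyx
    · exact (multinomial_pairTuple b hp).trans hb.symm
  calc _ = (rearrangements x ∪ rearrangements y ∪ P).ncard := by
        rw [Set.ncard_union_eq hdisjP (hRx.union hRy), Set.ncard_union_eq hdisj hRx hRy,
          ncard_rearrangements hx, ncard_rearrangements hy, hP]
        ring
    _ ≤ _ := Set.ncard_le_ncard hsub (Nat.finite_setOf_multinomial_eq (by omega))

section TwinTuples

def twinLeft (j s : ℕ) : Fin (4 + j) → ℕ :=
  Fin.append ![6 * s + 5, 3 * s + 3, s, 2 * s + 2] fun i => 7 * s + 7 + i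

def twinRight (j s : ℕ) : Fin (4 + j) → ℕ :=
  Fin.append ![6 * s + 6, 3 * s + 2, s + 1, 2 * s + 1] fun i => 7 * s + 7 + i

variable (j : ℕ)

theorem multinomial_twinRight (s : ℕ) :
    Nat.multinomial univ (twinRight j s) = Nat.multinomial univ (twinLeft j s) :=
  Nat.multinomial_append_congr _ (by
    simp only [Fin.sum_univ_four, Matrix.cons_val_zero, Matrix.cons_val_one, Matrix.cons_val]
    ring)
    (by simpa [Fin.prod_univ_four] using Nat.factorial_shift_of_succ_mul_succ_eq (by ring))

theorem twinLeft_injective (s : ℕ) : Injective (twinLeft j s) := by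
  refine Fin.append_injective_iff.2 ⟨?_, fun a b h => Fin.ext (by simpa using h), ?_⟩
  · intro a b h
    fin_cases a <;> fin_cases b <;> simp at h ⊢ <;> omega
  · intro a b
    fin_cases a <;> simp <;> omega

theorem twinRight_injective {s : ℕ} (hs : 0 < s) : Injective (twinRight j s) := by
  refine Fin.append_injective_iff.2 ⟨?_, fun a b h => Fin.ext (by simpa using h), ?_⟩
  · intro a b h
    fin_cases a <;> fin_cases b <;> simp at h ⊢ <;> omega
  · intro a b
    fin_cases a <;> simp <;> omega

theorem zero_notMem_range_twinLeft {s : ℕ} (hs : 0 < s) : 0 ∉ Set.range (twinLeft j s) := by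
  simp [twinLeft, Fin.forall_fin_add, Fin.forall_fin_succ]
  omega

theorem zero_notMem_range_twinRight (s : ℕ) : 0 ∉ Set.range (twinRight j s) := by
  simp [twinRight, Fin.forall_fin_add, Fin.forall_fin_succ]

theorem range_twinLeft_ne_range_twinRight (s : ℕ) :
    Set.range (twinLeft j s) ≠ Set.range (twinRight j s) := by
  intro h
  have hmem : s + 1 ∈ Set.range (twinRight j s) := ⟨Fin.castAdd j 2, by simp [twinRight]⟩
  rw [← h] at hmem
  revert hmem
  simp [twinLeft, Fin.forall_fin_add, Fin.forall_fin_succ]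
  exact ⟨by omega, fun _ => by omega⟩

theorem lt_multinomial_twinLeft (s : ℕ) : 6 * s + 5 < Nat.multinomial univ (twinLeft j s) := by
  have h₀ : twinLeft j s (Fin.castAdd j 0) = 6 * s + 5 := by simp [twinLeft]
  have hsum : ∑ i, twinLeft j s i = 12 * s + 10 + ∑ i : Fin j, (7 * s + 7 + i) := by
    simp only [twinLeft, Fin.sum_univ_add, Fin.append_left, Fin.append_right, Fin.sum_univ_four,
      Matrix.cons_val_zero, Matrix.cons_val_one, Matrix.cons_val]
    ring
  calc 6 * s + 5 < ∑ i, twinLeft j s i := by rw [hsum]; omega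
    _ ≤ _ := Nat.sum_le_multinomial_s11 (by rw [h₀]; omega) (by rw [h₀, hsum]; omega)

end TwinTuples

theorem infinitely_many_large_Nk (k : ℕ) (hk : 4 ≤ k) :
    {a : ℕ | 1 < a ∧ 2 * Nat.factorial k + k * (k - 1) ≤ Nk k a}.Infinite := by
  obtain ⟨j, rfl⟩ := Nat.exists_eq_add_of_le hk
  refine Set.infinite_of_not_bddAbove (not_bddAbove_iff.2 fun n => ?_)
  have hs : 0 < n + 1 := n.succ_pos
  have ha := lt_multinomial_twinLeft j (n + 1)
  refine ⟨Nat.multinomial univ (twinLeft j (n + 1)), ⟨by omega, ?_⟩, by omega⟩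
  simpa [Nk] using le_ncard_setOf_multinomial_eq (by rw [Fintype.card_fin]; omega) (twinLeft_injective j _)
    (twinRight_injective j hs) (zero_notMem_range_twinLeft j hs) (zero_notMem_range_twinRight j _)
    (range_twinLeft_ne_range_twinRight j _) (multinomial_twinRight j _) (by omega)
end

section
/- For a = 2671465728531600 one has N_4(a) ≥ 180; in particular, a equals the multinomial coefficients 37!/(17!·11!·9!·0!), 38!/(19!·11!·8!·0!), 39!/(19!·14!·6!·0!), 40!/(19!·16!·5!·0!), 40!/(20!·16!·3!·1!), 39!/(21!·13!·4!·1!), 38!/(22!·10!·4!·2!), and a!/((a-1)!·1!·0!·0!), each with its permutations of the lower entries. -/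
open Finset

namespace Nat

variable {α β : Type*}

theorem multinomial_univ_comp_equiv [Fintype α] [Fintype β] (f : β → ℕ) (e : α ≃ β) :
    multinomial univ (f ∘ e) = multinomial univ f := by
  simp only [multinomial, Function.comp_apply]
  rw [Equiv.sum_comp e f, Equiv.prod_comp e fun i => (f i)!]

theorem multinomial_univ_four (a b c d : ℕ) :
    multinomial univ ![a, b, c, d] = (a + b + c + d)! / (a ! * b ! * c ! * d !) := by
  rw [multinomial, Fin.sum_univ_four, Fin.prod_univ_four]
  rfl

theorem multinomial_univ_four_one_zero_zero (n : ℕ) :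
    multinomial univ ![n, 1, 0, 0] = n + 1 := by
  rw [multinomial_univ_four, factorial_succ]
  simp [factorial_pos]

theorem multinomial_eq_one_of_forall_eq_zero {s : Finset α} {f : α → ℕ}
    (h : ∀ i ∈ s, f i = 0) : multinomial s f = 1 := by
  rw [multinomial, sum_eq_zero h, prod_eq_one (f := fun i => (f i)!) fun i hi => by
    rw [h i hi, factorial_zero]]
  rfl

theorem le_multinomial_of_ne_one {s : Finset α} {f : α → ℕ} {i : α} (hi : i ∈ s)
    (h : multinomial s f ≠ 1) : f i ≤ multinomial s f := by
  classical
  rw [← insert_erase hi, multinomial_insert (notMem_erase i s)] at h ⊢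
  rcases Nat.eq_zero_or_pos (∑ j ∈ s.erase i, f j) with hS | hS
  · rw [hS, add_zero, choose_self, one_mul,
      multinomial_eq_one_of_forall_eq_zero (sum_eq_zero_iff.1 hS)] at h
    exact absurd rfl h
  · calc f i ≤ (f i + 1).choose (f i) := by rw [choose_succ_self_right]; exact le_succ _
      _ ≤ (f i + ∑ j ∈ s.erase i, f j).choose (f i) := choose_le_choose _ (by omega)
      _ ≤ _ := Nat.le_mul_of_pos_right _ (multinomial_pos _ _)

theorem finite_setOf_multinomial_univ_eq [Fintype α] {a : ℕ} (ha : a ≠ 1) :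
    {f : α → ℕ | multinomial univ f = a}.Finite :=
  (Set.Finite.pi fun _ => Set.finite_Iic a).subset fun f (hf : multinomial univ f = a) i _ =>
    hf ▸ le_multinomial_of_ne_one (mem_univ i) (hf ▸ ha)

end Nat

theorem card_le_Nk {k a : ℕ} (ha : a ≠ 1) {t : Finset (Fin k → ℕ)}
    (ht : ∀ m ∈ t, Nat.multinomial univ m = a) : t.card ≤ Nk k a := by
  rw [Nk, ← Set.ncard_coe_finset]
  exact Set.ncard_le_ncard ht (Nat.finite_setOf_multinomial_univ_eq ha)

def permOrbit {α : Type*} [Fintype α] [DecidableEq α] (m : α → ℕ) : Finset (α → ℕ) :=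
  univ.image fun σ : Equiv.Perm α => m ∘ σ

theorem multinomial_univ_eq_of_mem_permOrbit {α : Type*} [Fintype α] [DecidableEq α]
    {m m' : α → ℕ} (h : m' ∈ permOrbit m) : Nat.multinomial univ m' = Nat.multinomial univ m := by
  obtain ⟨σ, -, rfl⟩ := mem_image.1 h
  exact Nat.multinomial_univ_comp_equiv m σ

def solutionRepresentatives : Finset (Fin 4 → ℕ) :=
  {![17, 11, 9, 0], ![19, 11, 8, 0], ![19, 14, 6, 0], ![19, 16, 5, 0], ![20, 16, 3, 1],
    ![21, 13, 4, 1], ![22, 10, 4, 2], ![2671465728531600 - 1, 1, 0, 0]}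

set_option maxRecDepth 10000 in
theorem card_biUnion_permOrbit_solutionRepresentatives :
    (solutionRepresentatives.biUnion permOrbit).card = 180 := by
  decide

theorem N4_big_value :
    180 ≤ Nk 4 2671465728531600 ∧
    Nat.multinomial Finset.univ ![17, 11, 9, 0] = 2671465728531600 ∧
    Nat.multinomial Finset.univ ![19, 11, 8, 0] = 2671465728531600 ∧
    Nat.multinomial Finset.univ ![19, 14, 6, 0] = 2671465728531600 ∧
    Nat.multinomial Finset.univ ![19, 16, 5, 0] = 2671465728531600 ∧
    Nat.multinomial Finset.univ ![20, 16, 3, 1] = 2671465728531600 ∧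
    Nat.multinomial Finset.univ ![21, 13, 4, 1] = 2671465728531600 ∧
    Nat.multinomial Finset.univ ![22, 10, 4, 2] = 2671465728531600 ∧
    Nat.multinomial Finset.univ ![2671465728531600 - 1, 1, 0, 0] = 2671465728531600 := by
  have h₁ : Nat.multinomial univ ![17, 11, 9, 0] = 2671465728531600 := by decide
  have h₂ : Nat.multinomial univ ![19, 11, 8, 0] = 2671465728531600 := by decide
  have h₃ : Nat.multinomial univ ![19, 14, 6, 0] = 2671465728531600 := by decide
  have h₄ : Nat.multinomial univ ![19, 16, 5, 0] = 2671465728531600 := by decide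
  have h₅ : Nat.multinomial univ ![20, 16, 3, 1] = 2671465728531600 := by decide
  have h₆ : Nat.multinomial univ ![21, 13, 4, 1] = 2671465728531600 := by decide
  have h₇ : Nat.multinomial univ ![22, 10, 4, 2] = 2671465728531600 := by decide
  have h₈ : Nat.multinomial univ ![2671465728531600 - 1, 1, 0, 0] = 2671465728531600 :=
    Nat.multinomial_univ_four_one_zero_zero _
  refine ⟨?_, h₁, h₂, h₃, h₄, h₅, h₆, h₇, h₈⟩
  have hreps : ∀ r ∈ solutionRepresentatives, Nat.multinomial univ r = 2671465728531600 := by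
    simp only [solutionRepresentatives, mem_insert, mem_singleton, forall_eq_or_imp, forall_eq]
    exact ⟨h₁, h₂, h₃, h₄, h₅, h₆, h₇, h₈⟩
  rw [← card_biUnion_permOrbit_solutionRepresentatives]
  refine card_le_Nk (by norm_num) fun m hm => ?_
  obtain ⟨r, hr, hm⟩ := mem_biUnion.1 hm
  rw [multinomial_univ_eq_of_mem_permOrbit hm, hreps r hr]
end

section
/- Let k ≥ 2 and let m_1, …, m_k be nonnegative integers with m = m_1 + ⋯ + m_k. If m_i ≤ m − 2 for every index i, then m(m-1)/2 ≤ (m_1 + ⋯ + m_k)!/(m_1! ⋯ m_k!). -/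
/-!
If some part `mᵢ` is at least `2`, splitting off that part bounds the multinomial coefficient
below by `C(m, mᵢ)`, and `C(m, mᵢ) ≥ C(m, 2)` because `2 ≤ mᵢ ≤ m - 2` and binomial coefficients
are unimodal. Otherwise every part is `0` or `1`, the multinomial coefficient is `m!`, and
`C(m, 2) ≤ m!`.
-/

open Finset Nat

namespace Nat

theorem choose_le_choose_of_le_of_le_half (n : ℕ) {a b : ℕ} (hab : a ≤ b) (hb : b ≤ n / 2) :
    n.choose a ≤ n.choose b := by
  induction b, hab using Nat.le_induction with
  | base => rfl
  | succ c _ ih => exact (ih (by omega)).trans (choose_le_succ_of_lt_half_left (by omega))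

theorem choose_two_le_choose {n r : ℕ} (h2 : 2 ≤ r) (hr : r ≤ n - 2) :
    n.choose 2 ≤ n.choose r := by
  rcases le_or_gt r (n / 2) with hhalf | hhalf
  · exact choose_le_choose_of_le_of_le_half n h2 hhalf
  · rw [← choose_symm (show r ≤ n by omega)]
    exact choose_le_choose_of_le_of_le_half n (by omega) (by omega)

theorem choose_le_factorial (n k : ℕ) : n.choose k ≤ n ! := by
  rcases le_or_gt k n with hk | hk
  · calc n.choose k ≤ n.descFactorial k := choose_le_descFactorial n k
      _ ≤ (n - k)! * n.descFactorial k := Nat.le_mul_of_pos_left _ (factorial_pos _)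
      _ = n ! := factorial_mul_descFactorial hk
  · simp [choose_eq_zero_of_lt hk]

variable {α : Type*} {s : Finset α} {f : α → ℕ}

theorem choose_le_multinomial_of_mem [DecidableEq α] {i : α} (hi : i ∈ s) :
    (∑ j ∈ s, f j).choose (f i) ≤ multinomial s f := by
  rw [← insert_erase hi, multinomial_insert (notMem_erase i s), sum_insert (notMem_erase i s)]
  exact Nat.le_mul_of_pos_right _ (multinomial_pos _ _)

theorem multinomial_eq_factorial_of_le_one (hf : ∀ i ∈ s, f i ≤ 1) :
    multinomial s f = (∑ i ∈ s, f i)! := by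
  have hprod : ∏ i ∈ s, (f i)! = 1 :=
    prod_eq_one fun i hi => factorial_eq_one.mpr (hf i hi)
  simpa [hprod] using multinomial_spec s f

end Nat

theorem choose_two_le_multinomial_general (k : ℕ) (m : Fin k → ℕ)
    (h : ∀ i, m i ≤ (∑ i, m i) - 2) :
    (∑ i, m i) * ((∑ i, m i) - 1) / 2 ≤ Nat.multinomial Finset.univ m := by
  rw [← choose_two_right]
  by_cases hbig : ∃ i, 2 ≤ m i
  · obtain ⟨i, hi⟩ := hbig
    exact (choose_two_le_choose hi (h i)).trans (choose_le_multinomial_of_mem (mem_univ i))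
  · simp only [not_exists, not_le] at hbig
    rw [multinomial_eq_factorial_of_le_one fun i _ => le_of_lt_succ (hbig i)]
    exact choose_le_factorial _ _

theorem choose_two_le_multinomial (k : ℕ) (hk : 2 ≤ k) (m : Fin k → ℕ)
    (h : ∀ i, m i ≤ (∑ i, m i) - 2) :
    (∑ i, m i) * ((∑ i, m i) - 1) / 2 ≤ Nat.multinomial Finset.univ m :=
  choose_two_le_multinomial_general k m h
end
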